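/- arXiv:1911.09747 — 3 statements merged into one kernel-verified Lean document; each statement's English description precedes it below -/
import Mathlib

section
/- Let f : ℝ^n → ℝ be differentiable with L-Lipschitz gradient, let z, λ ∈ ℝ^n, ρ > 0, and define g(x) = f(x) + ⟨λ, z − x⟩ + (ρ/2)‖z − x‖². If x⁺ is a stationary point of g (i.e., ∇f(x⁺) − λ + ρ(x⁺ − z) = 0), then for every x ∈ ℝ^n, g(x) − g(x⁺) ≥ ((ρ − L)/2)‖x − x⁺‖². -/
/-!
Since `∇f` is `L`-Lipschitz, `f` lies above its tangent plane at `x⁺` up to `(L/2)‖x − x⁺‖²`.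
The proximal term `⟪λ, z − x⟫ + (ρ/2)‖z − x‖²` is a quadratic, so it equals its own first-order
expansion at `x⁺` plus exactly `(ρ/2)‖x − x⁺‖²`. Stationarity makes the two linear terms cancel.
-/

open RealInnerProductSpace

theorem le_image_one_of_deriv_ge {φ φ' : ℝ → ℝ} {c : ℝ}
    (hφ : ∀ t ∈ Set.Icc (0 : ℝ) 1, HasDerivAt φ (φ' t) t)
    (hφ' : ∀ t ∈ Set.Ioo (0 : ℝ) 1, φ' 0 - c * t ≤ φ' t) :
    φ 0 + φ' 0 - c / 2 ≤ φ 1 := by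
  set ψ : ℝ → ℝ := fun t => φ t - t * φ' 0 + c / 2 * t ^ 2
  have hψ : ∀ t ∈ Set.Icc (0 : ℝ) 1, HasDerivAt ψ (φ' t - φ' 0 + c * t) t := fun t ht => by
    refine (((hφ t ht).sub ((hasDerivAt_id' t).mul_const (φ' 0))).add
      ((hasDerivAt_pow 2 t).const_mul (c / 2))).congr_deriv ?_
    push_cast
    ring
  have hmono : MonotoneOn ψ (Set.Icc 0 1) := by
    refine monotoneOn_of_hasDerivWithinAt_nonneg (convex_Icc 0 1)
      (f' := fun t => φ' t - φ' 0 + c * t)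
      (fun t ht => (hψ t ht).continuousAt.continuousWithinAt) (fun t ht => ?_) (fun t ht => ?_)
    · exact (hψ t (interior_subset ht)).hasDerivWithinAt
    · rw [interior_Icc] at ht
      linarith [hφ' t ht]
  have h01 := hmono (Set.left_mem_Icc.2 zero_le_one) (Set.right_mem_Icc.2 zero_le_one) zero_le_one
  simp only [ψ] at h01
  linarith

variable {E : Type*} [NormedAddCommGroup E] [InnerProductSpace ℝ E]

theorem proximal_sub_eq (lam z x y : E) (ρ : ℝ) :
    (⟪lam, z - x⟫ + ρ / 2 * ‖z - x‖ ^ 2) - (⟪lam, z - y⟫ + ρ / 2 * ‖z - y‖ ^ 2)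
      = ⟪ρ • (y - z) - lam, x - y⟫ + ρ / 2 * ‖x - y‖ ^ 2 := by
  have hsq : ‖z - x‖ ^ 2 = ‖z - y‖ ^ 2 - 2 * ⟪z - y, x - y⟫ + ‖x - y‖ ^ 2 := by
    rw [show z - x = (z - y) - (x - y) by abel, norm_sub_sq_real]
  have hlin : ⟪lam, z - x⟫ = ⟪lam, z - y⟫ - ⟪lam, x - y⟫ := by
    rw [← inner_sub_right, sub_sub_sub_cancel_right]
  have hcross : ⟪ρ • (y - z) - lam, x - y⟫ = -ρ * ⟪z - y, x - y⟫ - ⟪lam, x - y⟫ := by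
    rw [inner_sub_left, real_inner_smul_left, ← neg_sub z y, inner_neg_left]
    ring
  rw [hsq, hlin, hcross]
  ring

variable [CompleteSpace E]

theorem hasDerivAt_comp_add_smul {f : E → ℝ} (hf : Differentiable ℝ f)
    (y v : E) (t : ℝ) :
    HasDerivAt (fun s : ℝ => f (y + s • v)) ⟪gradient f (y + t • v), v⟫ t := by
  have hline : HasDerivAt (fun s : ℝ => y + s • v) v t := by
    simpa using ((hasDerivAt_id t).smul_const v).const_add y
  exact (hf _).hasGradientAt.hasFDerivAt.comp_hasDerivAt t hline

theorem add_inner_gradient_sub_le_of_lipschitz_gradient {f : E → ℝ} {L : ℝ}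
    (hf : Differentiable ℝ f)
    (hlip : ∀ x₁ x₂ : E, ‖gradient f x₁ - gradient f x₂‖ ≤ L * ‖x₁ - x₂‖) (x y : E) :
    f y + ⟪gradient f y, x - y⟫ - L / 2 * ‖x - y‖ ^ 2 ≤ f x := by
  set v := x - y
  have hgrowth : ∀ t ∈ Set.Ioo (0 : ℝ) 1,
      ⟪gradient f y, v⟫ - L * ‖v‖ ^ 2 * t ≤ ⟪gradient f (y + t • v), v⟫ := fun t ht => by
    have hcs : |⟪gradient f (y + t • v) - gradient f y, v⟫| ≤ L * ‖v‖ ^ 2 * t :=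
      calc |⟪gradient f (y + t • v) - gradient f y, v⟫|
          ≤ ‖gradient f (y + t • v) - gradient f y‖ * ‖v‖ := abs_real_inner_le_norm _ _
        _ ≤ L * ‖(y + t • v) - y‖ * ‖v‖ := by gcongr; exact hlip _ _
        _ = L * ‖v‖ ^ 2 * t := by
          rw [add_sub_cancel_left, norm_smul, Real.norm_of_nonneg ht.1.le]
          ring
    rw [inner_sub_left] at hcs
    linarith [neg_abs_le (⟪gradient f (y + t • v), v⟫ - ⟪gradient f y, v⟫)]
  have h := le_image_one_of_deriv_ge
    (fun t _ => hasDerivAt_comp_add_smul hf y v t) (by simpa using hgrowth)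
  simp only [zero_smul, add_zero, one_smul, v, add_sub_cancel] at h
  linarith

theorem stmt_1_general {n : ℕ} (f : EuclideanSpace ℝ (Fin n) → ℝ) (L ρ : ℝ)
    (hf : Differentiable ℝ f)
    (hlip : ∀ x₁ x₂ : EuclideanSpace ℝ (Fin n),
      ‖gradient f x₁ - gradient f x₂‖ ≤ L * ‖x₁ - x₂‖)
    (z lam xp : EuclideanSpace ℝ (Fin n))
    (g : EuclideanSpace ℝ (Fin n) → ℝ)
    (hg : ∀ x, g x = f x + ⟪lam, z - x⟫ + ρ / 2 * ‖z - x‖ ^ 2)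
    (hstat : gradient f xp - lam + ρ • (xp - z) = 0) :
    ∀ x : EuclideanSpace ℝ (Fin n),
      g x - g xp ≥ (ρ - L) / 2 * ‖x - xp‖ ^ 2 := by
  intro x
  have hgrad : gradient f xp = -(ρ • (xp - z) - lam) := by
    rw [← sub_eq_zero, ← hstat]; abel
  have hdescent := add_inner_gradient_sub_le_of_lipschitz_gradient hf hlip x xp
  have hprox := proximal_sub_eq lam z x xp ρ
  rw [hgrad, inner_neg_left] at hdescent
  rw [hg x, hg xp]
  linarith

/-- For `f` with `L`-Lipschitz gradient,
`g(x) = f(x) + ⟪λ, z − x⟫ + (ρ/2)‖z − x‖²`, and `x⁺` a stationary point of `g`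
(i.e. `∇f(x⁺) − λ + ρ(x⁺ − z) = 0`), every `x` satisfies
`g(x) − g(x⁺) ≥ ((ρ − L)/2)‖x − x⁺‖²`. -/
theorem stmt_1 {n : ℕ} (f : EuclideanSpace ℝ (Fin n) → ℝ) (L ρ : ℝ) (hρ : 0 < ρ)
    (hf : Differentiable ℝ f)
    (hlip : ∀ x₁ x₂ : EuclideanSpace ℝ (Fin n),
      ‖gradient f x₁ - gradient f x₂‖ ≤ L * ‖x₁ - x₂‖)
    (z lam xp : EuclideanSpace ℝ (Fin n))
    (g : EuclideanSpace ℝ (Fin n) → ℝ)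
    (hg : ∀ x, g x = f x + ⟪lam, z - x⟫ + ρ / 2 * ‖z - x‖ ^ 2)
    (hstat : gradient f xp - lam + ρ • (xp - z) = 0) :
    ∀ x : EuclideanSpace ℝ (Fin n),
      g x - g xp ≥ (ρ - L) / 2 * ‖x - xp‖ ^ 2 :=
  stmt_1_general f L ρ hf hlip z lam xp g hg hstat
end

section
/- Let f : ℝ^n → ℝ be differentiable with L-Lipschitz gradient, let ρ > 0, and let x, x⁺, λ, λ⁺, z ∈ ℝ^n satisfy λ = ∇f(x), λ⁺ = ∇f(x⁺), and λ⁺ = λ + ρ(z − x⁺). Then ⟨λ⁺ − λ, z − x⁺⟩ = (1/ρ)‖λ⁺ − λ‖², and (1/ρ)‖λ⁺ − λ‖² ≤ (L²/ρ)‖x⁺ − x‖². Consequently, the increase in the augmented Lagrangian caused by the dual update, L_ρ(x⁺, z, λ⁺) − L_ρ(x⁺, z, λ) = ⟨λ⁺ − λ, z − x⁺⟩, is at most (L²/ρ)‖x⁺ − x‖². -/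
/-! The dual update gives `z - x⁺ = ρ⁻¹ (λ⁺ - λ)`, so the dual-update increase `⟪λ⁺ - λ, z - x⁺⟫`
equals `ρ⁻¹ ‖λ⁺ - λ‖²`; since `λ⁺ - λ = ∇f(x⁺) - ∇f(x)`, the Lipschitz bound on the gradient
controls it by `(L²/ρ) ‖x⁺ - x‖²`. -/

open RealInnerProductSpace

section DualUpdate

variable {E : Type*} [NormedAddCommGroup E] [InnerProductSpace ℝ E]

noncomputable def augLagrangian (f : E → ℝ) (ρ : ℝ) (x z lam : E) : ℝ :=
  f x + ⟪lam, z - x⟫ + ρ / 2 * ‖z - x‖ ^ 2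

theorem augLagrangian_sub_augLagrangian (f : E → ℝ) (ρ : ℝ) (x z lam lam' : E) :
    augLagrangian f ρ x z lam' - augLagrangian f ρ x z lam = ⟪lam' - lam, z - x⟫ := by
  rw [augLagrangian, augLagrangian, inner_sub_left]
  ring

theorem real_inner_eq_one_div_mul_norm_sq_of_eq_smul {d v : E} {ρ : ℝ} (hρ : ρ ≠ 0)
    (h : d = ρ • v) : ⟪d, v⟫ = 1 / ρ * ‖d‖ ^ 2 := by
  have hv : v = (1 / ρ) • d := by rw [h, smul_smul, one_div_mul_cancel hρ, one_smul]
  rw [hv, real_inner_smul_right, real_inner_self_eq_norm_sq]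

end DualUpdate

theorem stmt_2_general {n : ℕ} (f : EuclideanSpace ℝ (Fin n) → ℝ) (L ρ : ℝ) (hρ : 0 < ρ)
    (hlip : ∀ x₁ x₂ : EuclideanSpace ℝ (Fin n),
      ‖gradient f x₁ - gradient f x₂‖ ≤ L * ‖x₁ - x₂‖)
    (x xp lam lamp z : EuclideanSpace ℝ (Fin n))
    (hlam : lam = gradient f x) (hlamp : lamp = gradient f xp)
    (hup : lamp = lam + ρ • (z - xp)) :
    ⟪lamp - lam, z - xp⟫ = 1 / ρ * ‖lamp - lam‖ ^ 2 ∧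
    1 / ρ * ‖lamp - lam‖ ^ 2 ≤ L ^ 2 / ρ * ‖xp - x‖ ^ 2 ∧
    (f xp + ⟪lamp, z - xp⟫ + ρ / 2 * ‖z - xp‖ ^ 2) -
        (f xp + ⟪lam, z - xp⟫ + ρ / 2 * ‖z - xp‖ ^ 2) =
      ⟪lamp - lam, z - xp⟫ ∧
    (f xp + ⟪lamp, z - xp⟫ + ρ / 2 * ‖z - xp‖ ^ 2) -
        (f xp + ⟪lam, z - xp⟫ + ρ / 2 * ‖z - xp‖ ^ 2) ≤
      L ^ 2 / ρ * ‖xp - x‖ ^ 2 := by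
  have hinner : ⟪lamp - lam, z - xp⟫ = 1 / ρ * ‖lamp - lam‖ ^ 2 :=
    real_inner_eq_one_div_mul_norm_sq_of_eq_smul hρ.ne' (by rw [hup, add_sub_cancel_left])
  have hgrad : ‖lamp - lam‖ ≤ L * ‖xp - x‖ := hlam ▸ hlamp ▸ hlip xp x
  have hbound : 1 / ρ * ‖lamp - lam‖ ^ 2 ≤ L ^ 2 / ρ * ‖xp - x‖ ^ 2 :=
    calc 1 / ρ * ‖lamp - lam‖ ^ 2 ≤ 1 / ρ * (L * ‖xp - x‖) ^ 2 := by gcongr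
      _ = L ^ 2 / ρ * ‖xp - x‖ ^ 2 := by ring
  have hincrease := augLagrangian_sub_augLagrangian f ρ xp z lam lamp
  exact ⟨hinner, hbound, hincrease, hincrease.trans_le (hinner ▸ hbound)⟩

/-- With `λ = ∇f(x)`, `λ⁺ = ∇f(x⁺)` and the dual update
`λ⁺ = λ + ρ(z − x⁺)`, one has `⟪λ⁺ − λ, z − x⁺⟫ = (1/ρ)‖λ⁺ − λ‖²`,
`(1/ρ)‖λ⁺ − λ‖² ≤ (L²/ρ)‖x⁺ − x‖²`, and the augmented-Lagrangian increase
caused by the dual update equals `⟪λ⁺ − λ, z − x⁺⟫` and is at most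
`(L²/ρ)‖x⁺ − x‖²`. -/
theorem stmt_2 {n : ℕ} (f : EuclideanSpace ℝ (Fin n) → ℝ) (L ρ : ℝ) (hρ : 0 < ρ)
    (hf : Differentiable ℝ f)
    (hlip : ∀ x₁ x₂ : EuclideanSpace ℝ (Fin n),
      ‖gradient f x₁ - gradient f x₂‖ ≤ L * ‖x₁ - x₂‖)
    (x xp lam lamp z : EuclideanSpace ℝ (Fin n))
    (hlam : lam = gradient f x) (hlamp : lamp = gradient f xp)
    (hup : lamp = lam + ρ • (z - xp)) :
    ⟪lamp - lam, z - xp⟫ = 1 / ρ * ‖lamp - lam‖ ^ 2 ∧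
    1 / ρ * ‖lamp - lam‖ ^ 2 ≤ L ^ 2 / ρ * ‖xp - x‖ ^ 2 ∧
    (f xp + ⟪lamp, z - xp⟫ + ρ / 2 * ‖z - xp‖ ^ 2) -
        (f xp + ⟪lam, z - xp⟫ + ρ / 2 * ‖z - xp‖ ^ 2) =
      ⟪lamp - lam, z - xp⟫ ∧
    (f xp + ⟪lamp, z - xp⟫ + ρ / 2 * ‖z - xp‖ ^ 2) -
        (f xp + ⟪lam, z - xp⟫ + ρ / 2 * ‖z - xp‖ ^ 2) ≤
      L ^ 2 / ρ * ‖xp - x‖ ^ 2 :=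
  stmt_2_general f L ρ hρ hlip x xp lam lamp z hlam hlamp hup
end

section
/- Let f : ℝ^n → ℝ be differentiable with L-Lipschitz gradient, let z, λ ∈ ℝ^n, ρ > 0, and suppose λ = ∇f(x) for the current iterate x ∈ ℝ^n. Let x⁺ be a stationary point of g(y) = f(y) + ⟨λ, z − y⟩ + (ρ/2)‖z − y‖², and let λ⁺ = λ + ρ(z − x⁺). Then [f(x) + ⟨λ, z − x⟩ + (ρ/2)‖z − x‖²] − [f(x⁺) + ⟨λ⁺, z − x⁺⟩ + (ρ/2)‖z − x⁺‖²] ≥ (ρ/2 − L/2 − L²/ρ)‖x − x⁺‖². -/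
open RealInnerProductSpace

private lemma descent_lower {n : ℕ} (f : EuclideanSpace ℝ (Fin n) → ℝ) (L : ℝ)
    (hf : Differentiable ℝ f)
    (hlip : ∀ x₁ x₂ : EuclideanSpace ℝ (Fin n),
      ‖gradient f x₁ - gradient f x₂‖ ≤ L * ‖x₁ - x₂‖)
    (a b : EuclideanSpace ℝ (Fin n)) :
    f a + ⟪gradient f a, b - a⟫ - L / 2 * ‖b - a‖ ^ 2 ≤ f b := by
  set d := b - a with hd
  set φ : ℝ → ℝ := fun t => f (a + t • d) - t * ⟪gradient f a, d⟫ + L / 2 * t ^ 2 * ‖d‖ ^ 2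
    with hφ
  have hline : ∀ t : ℝ, HasDerivAt (fun s : ℝ => a + s • d)
      d t := by
    intro t
    simpa using ((hasDerivAt_id t).smul_const d).const_add a
  have hder : ∀ t : ℝ, HasDerivAt φ
      (⟪gradient f (a + t • d), d⟫ - ⟪gradient f a, d⟫ + L / 2 * (2 * t) * ‖d‖ ^ 2) t := by
    intro t
    have h1 : HasDerivAt (fun s : ℝ => f (a + s • d)) (⟪gradient f (a + t • d), d⟫) t := by
      have hg := (hf (a + t • d)).hasGradientAt
      have hF := hasGradientAt_iff_hasFDerivAt.mp hg
      have := hF.comp_hasDerivAt t (hline t)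
      simpa [InnerProductSpace.toDual_apply_apply, Function.comp_def] using this
    have h2 : HasDerivAt (fun s : ℝ => s * ⟪gradient f a, d⟫) (⟪gradient f a, d⟫) t := by
      simpa using (hasDerivAt_id t).mul_const (⟪gradient f a, d⟫)
    have h3 : HasDerivAt (fun s : ℝ => L / 2 * s ^ 2 * ‖d‖ ^ 2) (L / 2 * (2 * t) * ‖d‖ ^ 2) t := by
      have := ((hasDerivAt_pow 2 t).const_mul (L / 2)).mul_const (‖d‖ ^ 2)
      simpa [mul_comm, mul_assoc, mul_left_comm] using this
    exact (h1.sub h2).add h3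
  have hmono : MonotoneOn φ (Set.Icc (0:ℝ) 1) := by
    apply monotoneOn_of_deriv_nonneg (convex_Icc 0 1)
    · exact fun t _ => ((hder t).differentiableAt.continuousAt).continuousWithinAt
    · intro t ht
      exact ((hder t).differentiableAt).differentiableWithinAt
    · intro t ht
      rw [interior_Icc] at ht
      rw [(hder t).deriv]
      have hcs : ⟪gradient f (a + t • d) - gradient f a, d⟫ ≥
          -(‖gradient f (a + t • d) - gradient f a‖ * ‖d‖) := by
        have := abs_real_inner_le_norm (gradient f (a + t • d) - gradient f a) d
        have h' := neg_abs_le (⟪gradient f (a + t • d) - gradient f a, d⟫)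
        linarith
      have hlb : ‖gradient f (a + t • d) - gradient f a‖ ≤ L * (t * ‖d‖) := by
        have := hlip (a + t • d) a
        simpa [norm_smul, abs_of_pos ht.1, mul_assoc] using this
      have hdn : (0:ℝ) ≤ ‖d‖ := norm_nonneg _
      have : ⟪gradient f (a + t • d), d⟫ - ⟪gradient f a, d⟫ ≥ -(L * (t * ‖d‖) * ‖d‖) := by
        rw [← inner_sub_left]
        nlinarith [mul_le_mul_of_nonneg_right hlb hdn]
      nlinarith
  have h01 := hmono (Set.mem_Icc.mpr ⟨le_refl 0, zero_le_one⟩)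
    (Set.mem_Icc.mpr ⟨zero_le_one, le_refl 1⟩) zero_le_one
  have hb : a + d = b := by rw [hd]; abel
  have e0 : φ 0 = f a := by simp [hφ]
  have e1 : φ 1 = f b - ⟪gradient f a, d⟫ + L / 2 * ‖d‖ ^ 2 := by
    simp only [hφ, one_smul, one_pow, one_mul, hb, mul_one]
  rw [e0, e1] at h01
  linarith

/-- Single-agent primal–dual descent estimate. With `λ = ∇f(x)`,
`x⁺` a stationary point of `g(y) = f(y) + ⟪λ, z − y⟫ + (ρ/2)‖z − y‖²` and
`λ⁺ = λ + ρ(z − x⁺)`,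
`[f(x) + ⟪λ, z − x⟫ + (ρ/2)‖z − x‖²] − [f(x⁺) + ⟪λ⁺, z − x⁺⟫ + (ρ/2)‖z − x⁺‖²]
  ≥ (ρ/2 − L/2 − L²/ρ)‖x − x⁺‖²`. -/
theorem stmt_7 {n : ℕ} (f : EuclideanSpace ℝ (Fin n) → ℝ) (L ρ : ℝ) (hρ : 0 < ρ)
    (hf : Differentiable ℝ f)
    (hlip : ∀ x₁ x₂ : EuclideanSpace ℝ (Fin n),
      ‖gradient f x₁ - gradient f x₂‖ ≤ L * ‖x₁ - x₂‖)
    (z lam x xp lamp : EuclideanSpace ℝ (Fin n))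
    (hlam : lam = gradient f x)
    (hstat : gradient f xp - lam + ρ • (xp - z) = 0)
    (hlamp : lamp = lam + ρ • (z - xp)) :
    (f x + ⟪lam, z - x⟫ + ρ / 2 * ‖z - x‖ ^ 2) -
        (f xp + ⟪lamp, z - xp⟫ + ρ / 2 * ‖z - xp‖ ^ 2) ≥
      (ρ / 2 - L / 2 - L ^ 2 / ρ) * ‖x - xp‖ ^ 2 := by
  have hgp : gradient f xp = lamp := by
    rw [hlamp]
    have h := hstat
    have : gradient f xp = lam - ρ • (xp - z) := by
      linear_combination (norm := module) h
    rw [this]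
    module
  -- descent lemma at xp
  have hdesc := descent_lower f L hf hlip xp x
  rw [hgp] at hdesc
  -- identity for the remaining terms
  have key : ⟪lam, z - x⟫ - ⟪lamp, z - xp⟫ + ρ / 2 * (‖z - x‖ ^ 2 - ‖z - xp‖ ^ 2)
      + ⟪lamp, x - xp⟫ = ρ / 2 * ‖x - xp‖ ^ 2 - ρ * ‖z - xp‖ ^ 2 := by
    have hzx : z - x = (z - xp) - (x - xp) := by abel
    rw [hzx, hlamp]
    simp only [inner_sub_left, inner_sub_right, inner_add_left, inner_add_right,
      real_inner_smul_left, real_inner_smul_right, ← real_inner_self_eq_norm_sq]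
    rw [real_inner_comm xp z, real_inner_comm x z, real_inner_comm x xp]
    ring
  -- bound on ‖z - xp‖
  have hvb : ρ * ‖z - xp‖ ≤ L * ‖x - xp‖ := by
    have heq : ρ • (z - xp) = gradient f xp - gradient f x := by
      rw [hgp, ← hlam, hlamp]; module
    have := hlip xp x
    calc ρ * ‖z - xp‖ = ‖ρ • (z - xp)‖ := by
          rw [norm_smul, Real.norm_eq_abs, abs_of_pos hρ]
      _ = ‖gradient f xp - gradient f x‖ := by rw [heq]
      _ ≤ L * ‖xp - x‖ := this
      _ = L * ‖x - xp‖ := by rw [norm_sub_rev]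
  have hvsq : ρ * ‖z - xp‖ ^ 2 ≤ L ^ 2 / ρ * ‖x - xp‖ ^ 2 := by
    rw [div_mul_eq_mul_div, le_div_iff₀ hρ]
    have h0 : 0 ≤ ρ * ‖z - xp‖ := by positivity
    nlinarith [mul_self_le_mul_self h0 hvb]
  linarith [hdesc, key, hvsq]
end
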